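/- arXiv:2206.02065 — 8 statements merged into one kernel-verified Lean document; each statement's English description precedes it below -/
import Mathlib

section
/- For nonnegative integers r and s, the signed sum over all r-element subsets A of {1,2,...,r+s} of (-1)^{|{(b,a) : b < a, a ∈ A, b ∉ A}|} equals 0 if both r and s are odd, and equals the binomial coefficient C(⌊(r+s)/2⌋, ⌊r/2⌋) otherwise. -/
/-- The number of "inversions" of a subset `A` of `Fin m`: pairs `(b, a)` with
`b < a`, `a ∈ A`, `b ∉ A`. -/
def invCount {m : ℕ} (A : Finset (Fin m)) : ℕ :=
  (Finset.univ.filter (fun p : Fin m × Fin m => p.1 < p.2 ∧ p.2 ∈ A ∧ p.1 ∉ A)).card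

section Aux

open Finset Polynomial

/-- Fiberwise counting of pairs whose second coordinate lies in `A`. -/
lemma aux_fib {m : ℕ} (A : Finset (Fin m)) (q : Fin m → Fin m → Prop)
    [DecidablePred fun p : Fin m × Fin m => q p.1 p.2] [∀ a, DecidablePred fun b => q b a] :
    (univ.filter (fun p : Fin m × Fin m => q p.1 p.2 ∧ p.2 ∈ A)).card
      = ∑ a ∈ A, (univ.filter (fun b => q b a)).card := by
  rw [Finset.card_eq_sum_card_fiberwise (f := Prod.snd) (t := A)
    (fun p hp => (Finset.mem_filter.mp hp).2.2)]
  refine Finset.sum_congr rfl fun a ha => ?_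
  refine Finset.card_bij' (fun p _ => p.1) (fun b _ => (b, a)) ?_ ?_ ?_ ?_
  · intro p hp
    simp only [Finset.mem_filter, Finset.mem_univ, true_and] at hp ⊢
    obtain ⟨⟨h1, _⟩, h2⟩ := hp
    exact h2 ▸ h1
  · intro b hb
    simp only [Finset.mem_filter, Finset.mem_univ, true_and] at hb ⊢
    exact ⟨⟨hb, ha⟩, trivial⟩
  · intro p hp
    simp only [Finset.mem_filter] at hp
    exact Prod.ext rfl hp.2.symm
  · intro b hb; rfl

/-- The number of increasing pairs inside `A` is `C(|A|, 2)`. -/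
lemma aux_pairs_card {m : ℕ} (A : Finset (Fin m)) :
    (univ.filter (fun p : Fin m × Fin m => (p.1 < p.2 ∧ p.1 ∈ A) ∧ p.2 ∈ A)).card
      = A.card.choose 2 := by
  set W := univ.filter (fun p : Fin m × Fin m => (p.1 < p.2 ∧ p.1 ∈ A) ∧ p.2 ∈ A) with hW
  set W' := univ.filter (fun p : Fin m × Fin m => (p.2 < p.1 ∧ p.2 ∈ A) ∧ p.1 ∈ A) with hW'
  have hcard : W.card = W'.card := by
    refine Finset.card_bij' (fun p _ => p.swap) (fun p _ => p.swap) ?_ ?_ ?_ ?_ <;>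
      simp +contextual [hW, hW', and_comm]
  have hunion : W ∪ W' = A.offDiag := by
    ext p
    simp only [hW, hW', Finset.mem_union, Finset.mem_filter, Finset.mem_univ, true_and,
      Finset.mem_offDiag]
    constructor
    · rintro (⟨⟨h, h1⟩, h2⟩ | ⟨⟨h, h1⟩, h2⟩)
      · exact ⟨h1, h2, ne_of_lt h⟩
      · exact ⟨h2, h1, (ne_of_lt h).symm⟩
    · rintro ⟨h1, h2, h3⟩
      rcases lt_or_gt_of_ne h3 with h | h
      · exact Or.inl ⟨⟨h, h1⟩, h2⟩
      · exact Or.inr ⟨⟨h, h2⟩, h1⟩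
  have hdisj : Disjoint W W' := by
    rw [Finset.disjoint_left]
    intro p hp hp'
    simp only [hW, hW', Finset.mem_filter] at hp hp'
    exact absurd (lt_trans hp.2.1.1 hp'.2.1.1) (lt_irrefl _)
  have h2 : W.card + W'.card = A.card * A.card - A.card := by
    rw [← Finset.card_union_of_disjoint hdisj, hunion, Finset.offDiag_card]
  have hmul : A.card * (A.card - 1) = A.card * A.card - A.card := by
    cases A.card with
    | zero => simp
    | succ n => rw [Nat.succ_sub_one, Nat.mul_succ]; omega
  rw [Nat.choose_two_right]
  omega

/-- `inv(A) + C(|A|,2) = ∑_{a ∈ A} a`. -/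
lemma aux_invCount_add {m : ℕ} (A : Finset (Fin m)) :
    invCount A + A.card.choose 2 = ∑ a ∈ A, a.val := by
  have h1 : invCount A = ∑ a ∈ A, (univ.filter (fun b => b < a ∧ b ∉ A)).card := by
    rw [invCount, show (univ.filter (fun p : Fin m × Fin m => p.1 < p.2 ∧ p.2 ∈ A ∧ p.1 ∉ A))
        = univ.filter (fun p : Fin m × Fin m => (p.1 < p.2 ∧ p.1 ∉ A) ∧ p.2 ∈ A) by
      ext p; simp only [Finset.mem_filter]; tauto]
    exact aux_fib A (fun b a => b < a ∧ b ∉ A)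
  have h2 : A.card.choose 2 = ∑ a ∈ A, (univ.filter (fun b => b < a ∧ b ∈ A)).card := by
    rw [← aux_pairs_card A]
    exact aux_fib A (fun b a => b < a ∧ b ∈ A)
  have h3 : ∀ a : Fin m, (univ.filter (fun b => b < a ∧ b ∉ A)).card
      + (univ.filter (fun b => b < a ∧ b ∈ A)).card = a.val := by
    intro a
    have e1 : univ.filter (fun b => b < a ∧ b ∉ A)
        = (univ.filter (fun b => b < a)).filter (fun b => b ∉ A) := by
      rw [Finset.filter_filter]
    have e2 : univ.filter (fun b => b < a ∧ b ∈ A)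
        = (univ.filter (fun b => b < a)).filter (fun b => b ∈ A) := by
      rw [Finset.filter_filter]
    rw [e1, e2, add_comm, Finset.card_filter_add_card_filter_not,
      show univ.filter (fun b => b < a) = Finset.Iio a by ext b; simp, Fin.card_Iio]
  rw [h1, h2, ← Finset.sum_add_distrib]
  exact Finset.sum_congr rfl fun a _ => h3 a

lemma aux_prod_factor (m : ℕ) :
    (∏ i : Fin m, (X + C ((-1 : ℤ) ^ (i : ℕ))))
      = ((X : ℤ[X]) ^ 2 - 1) ^ (m / 2) * (X + 1) ^ (m % 2) := by
  rw [Fin.prod_univ_eq_prod_range (fun i => (X : ℤ[X]) + C ((-1 : ℤ) ^ i))]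
  induction m with
  | zero => simp
  | succ n ih =>
    rw [Finset.prod_range_succ, ih]
    rcases Nat.even_or_odd n with ⟨k, hk⟩ | ⟨k, hk⟩
    · have h1 : n / 2 = k := by omega
      have h2 : n % 2 = 0 := by omega
      have h3 : (n + 1) / 2 = k := by omega
      have h4 : (n + 1) % 2 = 1 := by omega
      have h5 : (-1 : ℤ) ^ n = 1 := by
        rw [hk]; exact Even.neg_one_pow ⟨k, by ring⟩
      rw [h1, h2, h3, h4, h5]
      simp [Polynomial.C_1]
    · have h1 : n / 2 = k := by omega
      have h2 : n % 2 = 1 := by omega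
      have h3 : (n + 1) / 2 = k + 1 := by omega
      have h4 : (n + 1) % 2 = 0 := by omega
      have h5 : (-1 : ℤ) ^ n = -1 := by
        rw [hk]; exact Odd.neg_one_pow ⟨k, by ring⟩
      rw [h1, h2, h3, h4, h5]
      simp only [pow_one, pow_zero, mul_one, map_neg, map_one]
      ring

lemma aux_coeff_pow_sq_sub_one (n k : ℕ) :
    (((X : ℤ[X]) ^ 2 - 1) ^ n).coeff k
      = if k % 2 = 0 then (-1 : ℤ) ^ (n - k / 2) * (n.choose (k / 2)) else 0 := by
  have h : ((X : ℤ[X]) ^ 2 - 1) ^ n = ∑ j ∈ Finset.range (n + 1),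
      X ^ (2 * j) * C ((-1 : ℤ) ^ (n - j) * (n.choose j)) := by
    rw [sub_eq_add_neg, add_pow]
    refine Finset.sum_congr rfl fun j hj => ?_
    rw [← pow_mul, show (-1 : ℤ[X]) = C (-1) by simp, ← C_pow, ← C_eq_natCast, mul_assoc]
    rw [← C_mul]
  rw [h, Polynomial.finset_sum_coeff]
  have hterm : ∀ j, (X ^ (2 * j) * C ((-1 : ℤ) ^ (n - j) * (n.choose j)) : ℤ[X]).coeff k
      = if 2 * j = k then (-1 : ℤ) ^ (n - j) * (n.choose j) else 0 := by
    intro j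
    rw [X_pow_mul_C, Polynomial.coeff_C_mul, Polynomial.coeff_X_pow]
    split <;> simp_all [eq_comm]
  simp only [hterm]
  by_cases hk : k % 2 = 0
  · rw [if_pos hk]
    by_cases hle : k / 2 ≤ n
    · rw [Finset.sum_eq_single (k / 2)]
      · rw [if_pos (by omega)]
      · intro j hj hne
        rw [if_neg (by simp only [Finset.mem_range] at hj; omega)]
      · intro habs
        exact absurd (Finset.mem_range.mpr (by omega)) habs
    · rw [Finset.sum_eq_zero, Nat.choose_eq_zero_of_lt (by omega), Nat.cast_zero, mul_zero]
      intro j hj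
      simp only [Finset.mem_range] at hj
      rw [if_neg (by omega)]
  · rw [if_neg hk, Finset.sum_eq_zero]
    intro j hj
    rw [if_neg (by omega)]

lemma aux_coeff_mul_X_add_one (P : ℤ[X]) (k : ℕ) :
    (P * (X + 1)).coeff k = (if k = 0 then 0 else P.coeff (k - 1)) + P.coeff k := by
  rw [mul_add, mul_one, coeff_add]
  congr 1
  cases k with
  | zero => simp
  | succ n => rw [coeff_mul_X]; simp

lemma aux_choose_two_parity (u : ℕ) :
    ((2 * u).choose 2) % 2 = u % 2 ∧ ((2 * u + 1).choose 2) % 2 = u % 2 := by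
  induction u with
  | zero => simp
  | succ w ih =>
    have e1 : ∀ n : ℕ, (n + 1).choose 2 = n + n.choose 2 := by
      intro n; rw [Nat.choose_succ_succ, Nat.choose_one_right]
    have h1 : (2 * (w + 1)).choose 2 = (2 * w + 1) + (2 * w + 1).choose 2 := by
      rw [show 2 * (w + 1) = (2 * w + 1) + 1 by ring, e1]
    have h2 : (2 * (w + 1) + 1).choose 2 = (2 * (w + 1)) + (2 * (w + 1)).choose 2 := by
      rw [e1]
    omega

lemma aux_negpow_congr (a b : ℕ) (h : a % 2 = b % 2) : (-1 : ℤ) ^ a = (-1) ^ b := by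
  rcases Nat.even_or_odd a with ha | ha
  · have h2 := Nat.even_iff.mp ha
    rw [ha.neg_one_pow, (Nat.even_iff.mpr (by omega)).neg_one_pow]
  · have h2 := Nat.odd_iff.mp ha
    rw [ha.neg_one_pow, (Nat.odd_iff.mpr (by omega)).neg_one_pow]

end Aux

open Finset Polynomial in
/-- The signed sum over all `r`-element subsets `A` of `{1,…,r+s}` of `(-1)^{inv(A)}`
equals `0` if both `r` and `s` are odd, and `C(⌊(r+s)/2⌋, ⌊r/2⌋)` otherwise. -/
theorem stmt0 (r s : ℕ) :
    ∑ A ∈ Finset.powersetCard r (Finset.univ : Finset (Fin (r + s))),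
      (-1 : ℤ) ^ invCount A
    = if Odd r ∧ Odd s then 0 else (((r + s) / 2).choose (r / 2) : ℤ) := by
  have hcardu : #(univ : Finset (Fin (r + s))) = r + s := by simp
  have hs : s ≤ #(univ : Finset (Fin (r + s))) := by rw [hcardu]; omega
  have key : ∑ A ∈ Finset.powersetCard r (Finset.univ : Finset (Fin (r + s))),
      (-1 : ℤ) ^ invCount A
      = (-1 : ℤ) ^ (r.choose 2)
        * ((((X : ℤ[X]) ^ 2 - 1) ^ ((r + s) / 2) * (X + 1) ^ ((r + s) % 2)).coeff s) := by
    rw [← aux_prod_factor,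
      Finset.prod_X_add_C_coeff univ (fun i : Fin (r + s) => (-1 : ℤ) ^ (i : ℕ)) hs,
      hcardu, show r + s - s = r by omega, Finset.mul_sum]
    refine Finset.sum_congr rfl fun A hA => ?_
    have hcard : A.card = r := (Finset.mem_powersetCard_univ.mp hA)
    have h1 : ∏ a ∈ A, ((-1 : ℤ) ^ (a : ℕ)) = (-1 : ℤ) ^ (∑ a ∈ A, (a : ℕ)) :=
      Finset.prod_pow_eq_pow_sum A _ _
    rw [h1, ← aux_invCount_add A, hcard, pow_add, mul_comm ((-1 : ℤ) ^ invCount A),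
      ← mul_assoc, ← pow_add, Even.neg_one_pow ⟨r.choose 2, rfl⟩, one_mul]
  rw [key]
  rcases Nat.even_or_odd r with ⟨u, hu⟩ | ⟨u, hu⟩ <;>
    rcases Nat.even_or_odd s with ⟨v, hv⟩ | ⟨v, hv⟩
  · -- r even, s even
    rw [show (r + s) / 2 = u + v by omega, show (r + s) % 2 = 0 by omega, pow_zero, mul_one,
      aux_coeff_pow_sq_sub_one, if_pos (by omega : s % 2 = 0), show s / 2 = v by omega,
      show u + v - v = u by omega,
      if_neg (fun h => by rcases h.1 with ⟨x, hx⟩; omega),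
      aux_negpow_congr (r.choose 2) u (by
        have := (aux_choose_two_parity u).1; rw [show r = 2 * u by omega]; omega),
      ← mul_assoc, ← pow_add, Even.neg_one_pow ⟨u, rfl⟩, one_mul,
      show r / 2 = u by omega,
      show (u + v).choose v = (u + v).choose u by
        have h := Nat.choose_symm (Nat.le_add_right u v)
        rwa [show u + v - u = v by omega] at h]
  · -- r even, s odd
    rw [show (r + s) / 2 = u + v by omega, show (r + s) % 2 = 1 by omega, pow_one,
      aux_coeff_mul_X_add_one, if_neg (by omega : ¬ s = 0),
      aux_coeff_pow_sq_sub_one, aux_coeff_pow_sq_sub_one,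
      if_pos (by omega : (s - 1) % 2 = 0), if_neg (by omega : ¬ s % 2 = 0),
      show (s - 1) / 2 = v by omega, show u + v - v = u by omega, add_zero,
      if_neg (fun h => by rcases h.1 with ⟨x, hx⟩; omega),
      aux_negpow_congr (r.choose 2) u (by
        have := (aux_choose_two_parity u).1; rw [show r = 2 * u by omega]; omega),
      ← mul_assoc, ← pow_add, Even.neg_one_pow ⟨u, rfl⟩, one_mul,
      show r / 2 = u by omega,
      show (u + v).choose v = (u + v).choose u by
        have h := Nat.choose_symm (Nat.le_add_right u v)
        rwa [show u + v - u = v by omega] at h]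
  · -- r odd, s even
    rw [show (r + s) / 2 = u + v by omega, show (r + s) % 2 = 1 by omega, pow_one,
      aux_coeff_mul_X_add_one]
    have hz : (if s = 0 then (0 : ℤ)
        else ((((X : ℤ[X]) ^ 2 - 1) ^ (u + v)).coeff (s - 1))) = 0 := by
      split
      · rfl
      · rw [aux_coeff_pow_sq_sub_one, if_neg (by omega : ¬ (s - 1) % 2 = 0)]
    rw [hz, zero_add, aux_coeff_pow_sq_sub_one, if_pos (by omega : s % 2 = 0),
      show s / 2 = v by omega, show u + v - v = u by omega,
      if_neg (fun h => by rcases h.2 with ⟨x, hx⟩; omega),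
      aux_negpow_congr (r.choose 2) u (by
        have := (aux_choose_two_parity u).2; rw [show r = 2 * u + 1 by omega]; omega),
      ← mul_assoc, ← pow_add, Even.neg_one_pow ⟨u, rfl⟩, one_mul,
      show r / 2 = u by omega,
      show (u + v).choose v = (u + v).choose u by
        have h := Nat.choose_symm (Nat.le_add_right u v)
        rwa [show u + v - u = v by omega] at h]
  · -- r odd, s odd
    rw [show (r + s) / 2 = u + v + 1 by omega, show (r + s) % 2 = 0 by omega, pow_zero, mul_one,
      aux_coeff_pow_sq_sub_one, if_neg (by omega : ¬ s % 2 = 0), mul_zero,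
      if_pos ⟨⟨u, hu⟩, ⟨v, hv⟩⟩]
end

section
/- For nonnegative integers r and s, the q-binomial coefficient [r+s choose r]_q evaluated at q = -1 equals 0 if both r and s are odd, and equals C(⌊(r+s)/2⌋, ⌊r/2⌋) otherwise. -/
open Polynomial

/-- The Gaussian (q-)binomial coefficient `[n choose k]_q` as a polynomial in `q`
over `ℤ`, defined by the Pascal-type recursion
`[n+1 choose k+1] = [n choose k] + q^(k+1) [n choose k+1]`. -/
noncomputable def qBinomial : ℕ → ℕ → Polynomial ℤ
  | _, 0 => 1
  | 0, _ + 1 => 0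
  | n + 1, k + 1 => qBinomial n k + Polynomial.X ^ (k + 1) * qBinomial n (k + 1)

lemma qBinomial_eval_neg_one : ∀ n k : ℕ,
    (qBinomial n k).eval (-1 : ℤ)
    = if Even n ∧ Odd k then 0 else ((n / 2).choose (k / 2) : ℤ) := by
  intro n
  induction n with
  | zero =>
    intro k
    cases k with
    | zero => simp [qBinomial]
    | succ k =>
      simp only [qBinomial, eval_zero]
      split_ifs with h
      · rfl
      · have hk : Even (k + 1) := by
          rcases Nat.even_or_odd (k + 1) with h' | h'
          · exact h'
          · exact absurd ⟨Even.zero, h'⟩ h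
        obtain ⟨m, hm⟩ := hk
        rw [Nat.choose_eq_zero_of_lt (by omega)]
        simp
  | succ n ih =>
    intro k
    cases k with
    | zero => simp [qBinomial]
    | succ k =>
      simp only [qBinomial, eval_add, eval_mul, eval_pow, eval_X, ih]
      rcases Nat.even_or_odd n with ⟨a, ha⟩ | ⟨a, ha⟩ <;>
        rcases Nat.even_or_odd k with ⟨b, hb⟩ | ⟨b, hb⟩ <;> subst ha hb
      · -- n even, k even
        have h1 : ¬ (Even (a + a) ∧ Odd (b + b)) := by
          rintro ⟨-, h⟩; exact (Nat.not_odd_iff_even.mpr ⟨b, by ring⟩) h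
        have h2 : Even (a + a) ∧ Odd (b + b + 1) := ⟨⟨a, rfl⟩, ⟨b, by ring⟩⟩
        have h3 : ¬ (Even (a + a + 1) ∧ Odd (b + b + 1)) := by
          rintro ⟨h, -⟩; exact (Nat.not_even_iff_odd.mpr ⟨a, by ring⟩) h
        rw [if_neg h1, if_pos h2, if_neg h3]
        have e1 : (a + a) / 2 = a := by omega
        have e2 : (b + b) / 2 = b := by omega
        have e3 : (a + a + 1) / 2 = a := by omega
        have e4 : (b + b + 1) / 2 = b := by omega
        rw [e1, e2, e3, e4]; ring
      · -- n even, k odd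
        have h1 : Even (a + a) ∧ Odd (2 * b + 1) := ⟨⟨a, rfl⟩, ⟨b, by ring⟩⟩
        have h2 : ¬ (Even (a + a) ∧ Odd (2 * b + 1 + 1)) := by
          rintro ⟨-, h⟩; exact (Nat.not_odd_iff_even.mpr ⟨b + 1, by ring⟩) h
        have h3 : ¬ (Even (a + a + 1) ∧ Odd (2 * b + 1 + 1)) := by
          rintro ⟨h, -⟩; exact (Nat.not_even_iff_odd.mpr ⟨a, by ring⟩) h
        rw [if_pos h1, if_neg h2, if_neg h3]
        have e1 : (a + a) / 2 = a := by omega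
        have e2 : (2 * b + 1 + 1) / 2 = b + 1 := by omega
        have e3 : (a + a + 1) / 2 = a := by omega
        rw [e1, e2, e3, Even.neg_one_pow ⟨b + 1, by ring⟩]
        ring
      · -- n odd, k even
        have h1 : ¬ (Even (2 * a + 1) ∧ Odd (b + b)) := by
          rintro ⟨h, -⟩; exact (Nat.not_even_iff_odd.mpr ⟨a, by ring⟩) h
        have h2 : ¬ (Even (2 * a + 1) ∧ Odd (b + b + 1)) := by
          rintro ⟨h, -⟩; exact (Nat.not_even_iff_odd.mpr ⟨a, by ring⟩) h
        have h3 : Even (2 * a + 1 + 1) ∧ Odd (b + b + 1) :=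
          ⟨⟨a + 1, by ring⟩, ⟨b, by ring⟩⟩
        rw [if_neg h1, if_neg h2, if_pos h3]
        have e1 : (2 * a + 1) / 2 = a := by omega
        have e2 : (b + b) / 2 = b := by omega
        have e4 : (b + b + 1) / 2 = b := by omega
        rw [e1, e2, e4, Odd.neg_one_pow ⟨b, by ring⟩]
        ring
      · -- n odd, k odd
        have h1 : ¬ (Even (2 * a + 1) ∧ Odd (2 * b + 1)) := by
          rintro ⟨h, -⟩; exact (Nat.not_even_iff_odd.mpr ⟨a, by ring⟩) h
        have h2 : ¬ (Even (2 * a + 1) ∧ Odd (2 * b + 1 + 1)) := by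
          rintro ⟨h, -⟩; exact (Nat.not_even_iff_odd.mpr ⟨a, by ring⟩) h
        have h3 : ¬ (Even (2 * a + 1 + 1) ∧ Odd (2 * b + 1 + 1)) := by
          rintro ⟨-, h⟩; exact (Nat.not_odd_iff_even.mpr ⟨b + 1, by ring⟩) h
        rw [if_neg h1, if_neg h2, if_neg h3]
        have e1 : (2 * a + 1) / 2 = a := by omega
        have e2 : (2 * b + 1) / 2 = b := by omega
        have e3 : (2 * b + 1 + 1) / 2 = b + 1 := by omega
        have e4 : (2 * a + 1 + 1) / 2 = a + 1 := by omega
        rw [e1, e2, e3, e4, Even.neg_one_pow ⟨b + 1, by ring⟩,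
          Nat.choose_succ_succ a b]
        push_cast
        ring

/-- The q-binomial coefficient `[r+s choose r]_q` evaluated at `q = -1` equals `0`
if both `r` and `s` are odd, and `C(⌊(r+s)/2⌋, ⌊r/2⌋)` otherwise. -/
theorem stmt1 (r s : ℕ) :
    (qBinomial (r + s) r).eval (-1 : ℤ)
    = if Odd r ∧ Odd s then 0 else (((r + s) / 2).choose (r / 2) : ℤ) := by
  rw [qBinomial_eval_neg_one]
  have : (Even (r + s) ∧ Odd r) ↔ (Odd r ∧ Odd s) := by
    simp [Nat.even_iff, Nat.odd_iff]; omega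
  simp [this]
end

section
/- In the exterior algebra Λ(Q^n) with generators θ_1,...,θ_n, let F_r = Σ_{A ⊆ [n], |A| = r} θ_A, where θ_A is the ordered product of θ_a for a ∈ A in increasing order. Then for all r, s ≥ 0, F_r · F_s = a_{r,s} · F_{r+s}, where a_{r,s} = 0 if r and s are both odd, and a_{r,s} = C(⌊(r+s)/2⌋, ⌊r/2⌋) otherwise. -/
/-!
Expanding the product, `θ_A θ_B` vanishes unless `A` and `B` are disjoint, and is otherwise
`(-1)^inv(A,B) θ_{A ∪ B}`, where `inv(A,B)` counts the pairs `a ∈ A`, `b ∈ B` with `b < a`.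
So the coefficient of `θ_C` in `F_r F_s` is `∑_{A ⊆ C, |A| = r} (-1)^inv(A, C \ A)`: the
Gaussian binomial `[r+s choose r]_q` at `q = -1`. Splitting off the minimum of `C` gives the
`q`-Pascal recurrence `[m+1 choose r+1]_q = q^(r+1) [m choose r+1]_q + [m choose r]_q`, which
the closed form `a_{r,s}` satisfies at `q = -1` by a parity case analysis and Pascal's rule.
-/

open ExteriorAlgebra

/-- The generator `θ_i` of the exterior algebra `Λ(ℚ^n)`. -/
noncomputable def theta (n : ℕ) (i : Fin n) : ExteriorAlgebra ℚ (Fin n → ℚ) :=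
  ExteriorAlgebra.ι ℚ (Pi.single i (1 : ℚ))

/-- For `A = {a_1 < a_2 < ⋯ < a_k} ⊆ [n]`, the monomial `θ_A = θ_{a_1} θ_{a_2} ⋯ θ_{a_k}`. -/
noncomputable def thetaA (n : ℕ) (A : Finset (Fin n)) : ExteriorAlgebra ℚ (Fin n → ℚ) :=
  ((A.sort (· ≤ ·)).map (theta n)).prod

/-- The fundamental quasisymmetric invariant `F_{1^r} = Σ_{A ⊆ [n], |A| = r} θ_A`. -/
noncomputable def Fq (n r : ℕ) : ExteriorAlgebra ℚ (Fin n → ℚ) :=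
  ∑ A ∈ Finset.powersetCard r (Finset.univ : Finset (Fin n)), thetaA n A

open Finset

def productCoeff (r s : ℕ) : ℤ :=
  if Odd r ∧ Odd s then 0 else (((r + s) / 2).choose (r / 2) : ℤ)

namespace productCoeff

@[simp] lemma zero_left (s : ℕ) : productCoeff 0 s = 1 := by
  simp [productCoeff]

@[simp] lemma zero_right (r : ℕ) : productCoeff r 0 = 1 := by
  simp [productCoeff]

lemma even_even (i j : ℕ) : productCoeff (2 * i) (2 * j) = (i + j).choose i := by
  simp [productCoeff, ← mul_add]

lemma even_odd (i j : ℕ) : productCoeff (2 * i) (2 * j + 1) = (i + j).choose i := by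
  simp [productCoeff, ← add_assoc, ← mul_add, Nat.mul_add_div]

lemma odd_even (i j : ℕ) : productCoeff (2 * i + 1) (2 * j) = (i + j).choose i := by
  rw [productCoeff, if_neg (by simp), show 2 * i + 1 + 2 * j = 2 * (i + j) + 1 by ring]
  simp [Nat.mul_add_div]

lemma odd_odd (i j : ℕ) : productCoeff (2 * i + 1) (2 * j + 1) = 0 := by
  simp [productCoeff]

lemma succ_succ (r s : ℕ) :
    productCoeff (r + 1) (s + 1) =
      productCoeff r (s + 1) + (-1) ^ (r + 1) * productCoeff (r + 1) s := by
  obtain ⟨i, rfl | rfl⟩ := Nat.even_or_odd' r <;>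
    obtain ⟨j, rfl | rfl⟩ := Nat.even_or_odd' s
  · simp [even_odd, odd_even, odd_odd, pow_succ]
  · rw [show 2 * j + 1 + 1 = 2 * (j + 1) by ring]
    simp [even_even, odd_even, odd_odd, pow_succ]
  · rw [show 2 * i + 1 + 1 = 2 * (i + 1) by ring]
    simp [even_even, even_odd, odd_odd, pow_succ, pow_mul]
  · rw [show 2 * i + 1 + 1 = 2 * (i + 1) by ring, show 2 * j + 1 + 1 = 2 * (j + 1) by ring]
    simp only [even_even, even_odd, odd_even, pow_succ, pow_mul]
    rw [show i + 1 + (j + 1) = i + j + 1 + 1 by ring, Nat.choose_succ_succ,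
      show i + 1 + j = i + j + 1 by ring, show i + (j + 1) = i + j + 1 by ring]
    push_cast
    ring

end productCoeff

section Inversions

variable {α : Type*} [LinearOrder α]

def crossInversions (A B : Finset α) : ℕ :=
  ∑ a ∈ A, #(B.filter (· < a))

@[simp] lemma crossInversions_empty_left (B : Finset α) : crossInversions ∅ B = 0 := by
  simp [crossInversions]

lemma crossInversions_insert_left {a : α} {A : Finset α} (B : Finset α) (ha : a ∉ A) :
    crossInversions (insert a A) B = #(B.filter (· < a)) + crossInversions A B :=
  sum_insert ha

lemma crossInversions_insert_min_left {a : α} {A B : Finset α} (ha : a ∉ A)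
    (hB : ∀ b ∈ B, a < b) : crossInversions (insert a A) B = crossInversions A B := by
  rw [crossInversions_insert_left B ha, filter_false_of_mem fun b hb => (hB b hb).not_gt,
    card_empty, zero_add]

lemma crossInversions_insert_min_right {a : α} {A B : Finset α} (hB : a ∉ B)
    (hA : ∀ x ∈ A, a < x) : crossInversions A (insert a B) = crossInversions A B + #A := by
  rw [crossInversions, crossInversions, card_eq_sum_ones, ← sum_add_distrib]
  refine sum_congr rfl fun x hx => ?_
  rw [filter_insert, if_pos (hA x hx), card_insert_of_notMem fun h => hB (mem_filter.1 h).1]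

def signedSubsetSum (C : Finset α) (r : ℕ) : ℤ :=
  ∑ A ∈ C.powersetCard r, (-1) ^ crossInversions A (C \ A)

@[simp] lemma signedSubsetSum_zero (C : Finset α) : signedSubsetSum C 0 = 1 := by
  simp [signedSubsetSum]

lemma signedSubsetSum_of_card_lt {C : Finset α} {r : ℕ} (h : #C < r) :
    signedSubsetSum C r = 0 := by
  rw [signedSubsetSum, powersetCard_eq_empty.2 h, sum_empty]

lemma signedSubsetSum_insert_min {a : α} {C : Finset α} (hC : ∀ x ∈ C, a < x) (r : ℕ) :
    signedSubsetSum (insert a C) (r + 1) =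
      (-1) ^ (r + 1) * signedSubsetSum C (r + 1) + signedSubsetSum C r := by
  have haC : a ∉ C := fun h => lt_irrefl a (hC a h)
  rw [signedSubsetSum, signedSubsetSum, signedSubsetSum, powersetCard_succ_insert haC, sum_union,
    sum_image, mul_sum]
  · congr 1
    · refine sum_congr rfl fun A hA => ?_
      obtain ⟨hAC, hAcard⟩ := mem_powersetCard.1 hA
      rw [insert_sdiff_of_notMem _ fun h => haC (hAC h),
        crossInversions_insert_min_right (fun h => haC (mem_sdiff.1 h).1)
          fun x hx => hC x (hAC hx), hAcard, pow_add, mul_comm]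
    · refine sum_congr rfl fun A hA => ?_
      have haA : a ∉ A := fun h => haC ((mem_powersetCard.1 hA).1 h)
      rw [insert_sdiff_insert, sdiff_insert_of_notMem haC,
        crossInversions_insert_min_left haA fun x hx => hC x (mem_sdiff.1 hx).1]
  · intro A hA B hB hAB
    rw [← erase_insert (a := a) fun h => haC ((mem_powersetCard.1 hA).1 h), hAB,
      erase_insert fun h => haC ((mem_powersetCard.1 hB).1 h)]
  · exact disjoint_left.2 fun A hA hA' => by
      obtain ⟨B, -, rfl⟩ := mem_image.1 hA'
      exact haC ((mem_powersetCard.1 hA).1 (mem_insert_self a B))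

theorem signedSubsetSum_eq_productCoeff (C : Finset α) {r s : ℕ} (h : #C = r + s) :
    signedSubsetSum C r = productCoeff r s := by
  induction C using Finset.induction_on_min generalizing r s with
  | empty =>
    obtain ⟨rfl, rfl⟩ : r = 0 ∧ s = 0 := by simp at h; omega
    simp
  | insert a C hC ih =>
    rw [card_insert_of_notMem fun h => lt_irrefl a (hC a h)] at h
    match r, s with
    | 0, _ => simp
    | r + 1, 0 =>
      rw [signedSubsetSum_insert_min hC, signedSubsetSum_of_card_lt (by omega),
        ih (r := r) (s := 0) (by omega)]
      simp
    | r + 1, s + 1 =>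
      rw [signedSubsetSum_insert_min hC, ih (r := r + 1) (s := s) (by omega),
        ih (r := r) (s := s + 1) (by omega), productCoeff.succ_succ]
      ring

end Inversions

section ExteriorAlgebra

variable {n : ℕ}

lemma theta_mul_self (i : Fin n) : theta n i * theta n i = 0 := ι_sq_zero _

lemma theta_mul_theta_comm (i j : Fin n) : theta n i * theta n j = -(theta n j * theta n i) :=
  eq_neg_of_add_eq_zero_left (ι_add_mul_swap _ _)

@[simp] lemma thetaA_empty : thetaA n ∅ = 1 := by
  simp [thetaA]

lemma thetaA_insert_of_forall_lt {a : Fin n} {B : Finset (Fin n)} (hB : ∀ b ∈ B, a < b) :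
    thetaA n (insert a B) = theta n a * thetaA n B := by
  rw [thetaA, sort_insert (· ≤ ·) (fun b hb => (hB b hb).le) fun h => lt_irrefl a (hB a h)]
  simp [thetaA]

lemma theta_mul_thetaA (a : Fin n) (B : Finset (Fin n)) :
    theta n a * thetaA n B =
      if a ∈ B then 0 else ((-1 : ℚ) ^ #(B.filter (· < a))) • thetaA n (insert a B) := by
  induction B using Finset.induction_on_min with
  | empty => simp [thetaA]
  | insert b B hB ih =>
    rw [thetaA_insert_of_forall_lt hB]
    rcases lt_trichotomy a b with hab | rfl | hba
    · have haB : ∀ x ∈ insert b B, a < x := by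
        simpa [hab] using fun x hx => hab.trans (hB x hx)
      rw [if_neg fun h => lt_irrefl a (haB a h),
        filter_false_of_mem fun x hx => (haB x hx).not_gt, thetaA_insert_of_forall_lt haB,
        thetaA_insert_of_forall_lt hB]
      simp
    · rw [← mul_assoc, theta_mul_self, zero_mul, if_pos (mem_insert_self a B)]
    · rw [← mul_assoc, theta_mul_theta_comm, neg_mul, mul_assoc, ih]
      by_cases haB : a ∈ B
      · simp [haB]
      · have hbaB : ∀ x ∈ insert a B, b < x := by simpa [hba] using hB
        rw [if_neg haB, if_neg (by simp [haB, hba.ne']), filter_insert, if_pos hba,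
          card_insert_of_notMem fun h => lt_irrefl b (hB b (mem_filter.1 h).1), mul_smul_comm,
          ← thetaA_insert_of_forall_lt hbaB, insert_comm, pow_succ, mul_comm, ← smul_smul]
        simp

lemma thetaA_mul_thetaA (A B : Finset (Fin n)) :
    thetaA n A * thetaA n B =
      if Disjoint A B then ((-1 : ℚ) ^ crossInversions A B) • thetaA n (A ∪ B) else 0 := by
  induction A using Finset.induction_on_min with
  | empty => simp
  | insert a A hA ih =>
    have haA : a ∉ A := fun h => lt_irrefl a (hA a h)
    rw [thetaA_insert_of_forall_lt hA, mul_assoc, ih]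
    by_cases hAB : Disjoint A B
    · rw [if_pos hAB, mul_smul_comm, theta_mul_thetaA]
      by_cases haB : a ∈ B
      · simp [haB]
      · rw [if_neg (by simp [haA, haB]), if_pos (disjoint_insert_left.2 ⟨haB, hAB⟩),
          filter_union, filter_false_of_mem fun x hx => (hA x hx).not_gt, empty_union,
          crossInversions_insert_left B haA, smul_smul, ← pow_add, insert_union, add_comm]
    · rw [if_neg hAB, if_neg fun h => hAB (disjoint_insert_left.1 h).2, mul_zero]

end ExteriorAlgebra

lemma sum_disjoint_powersetCard_pairs {α β : Type*} [Fintype α] [DecidableEq α]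
    [AddCommMonoid β] (r s : ℕ) (f : Finset α → Finset α → β) :
    ∑ A ∈ powersetCard r univ, ∑ B ∈ powersetCard s univ,
        (if Disjoint A B then f A B else 0) =
      ∑ C ∈ powersetCard (r + s) univ, ∑ A ∈ C.powersetCard r, f A (C \ A) := by
  rw [← sum_product', ← sum_filter, sum_sigma']
  refine sum_nbij' (fun p => ⟨p.1 ∪ p.2, p.1⟩) (fun q => (q.2, q.1 \ q.2)) ?_ ?_ ?_ ?_ ?_
  · rintro ⟨A, B⟩ hAB
    simp only [mem_filter, mem_product, mem_powersetCard_univ] at hAB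
    simp [card_union_of_disjoint hAB.2, hAB.1.1, hAB.1.2]
  · rintro ⟨C, A⟩ hCA
    simp only [mem_sigma, mem_powersetCard] at hCA
    simp [card_sdiff_of_subset hCA.2.1, hCA.1, hCA.2.2, disjoint_sdiff]
  · rintro ⟨A, B⟩ hAB
    simp [union_sdiff_cancel_left (mem_filter.1 hAB).2]
  · rintro ⟨C, A⟩ hCA
    simp [union_sdiff_of_subset (mem_powersetCard.1 (mem_sigma.1 hCA).2).1]
  · rintro ⟨A, B⟩ hAB
    simp [union_sdiff_cancel_left (mem_filter.1 hAB).2]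

lemma Fq_mul_Fq (n r s : ℕ) :
    Fq n r * Fq n s =
      ∑ C ∈ powersetCard (r + s) univ, (signedSubsetSum C r : ℚ) • thetaA n C := by
  rw [Fq, Fq, sum_mul_sum]
  simp_rw [thetaA_mul_thetaA]
  rw [sum_disjoint_powersetCard_pairs]
  refine sum_congr rfl fun C _ => ?_
  rw [signedSubsetSum, Int.cast_sum, sum_smul]
  refine sum_congr rfl fun A hA => ?_
  rw [union_sdiff_of_subset (mem_powersetCard.1 hA).1]
  simp

/-- `F_r F_s = a_{r,s} F_{r+s}`. -/
theorem stmt3 (n r s : ℕ) :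
    Fq n r * Fq n s
    = (if Odd r ∧ Odd s then 0 else (((r + s) / 2).choose (r / 2) : ℚ)) • Fq n (r + s) := by
  rw [Fq_mul_Fq, Fq, smul_sum]
  refine sum_congr rfl fun C hC => ?_
  rw [signedSubsetSum_eq_productCoeff C (mem_powersetCard_univ.1 hC), productCoeff]
  split_ifs <;> simp
end

section
/- The generating function Σ_{r,s ≥ 0} a_{r,s} x^r y^s, where a_{r,s} = 0 if r,s both odd and a_{r,s} = C(⌊(r+s)/2⌋, ⌊r/2⌋) otherwise, equals (1 + x + y)/(1 - x² - y²) as a formal power series in two variables. -/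
open MvPowerSeries

/-- `a_{r,s}`: `0` if `r, s` are both odd, `C(⌊(r+s)/2⌋, ⌊r/2⌋)` otherwise. -/
def aCoeff (r s : ℕ) : ℚ :=
  if Odd r ∧ Odd s then 0 else (((r + s) / 2).choose (r / 2) : ℚ)

/-- The generating function `Σ_{r,s≥0} a_{r,s} x^r y^s` as a formal power series in
two variables `x = X 0`, `y = X 1`. -/
noncomputable def genF : MvPowerSeries (Fin 2) ℚ :=
  fun d => aCoeff (d 0) (d 1)

lemma aCoeff_ee (a b : ℕ) : aCoeff (2*a) (2*b) = ((a+b).choose a : ℚ) := by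
  rw [aCoeff, if_neg (by rintro ⟨⟨c,hc⟩,⟨d,hd⟩⟩; omega),
    show (2*a + 2*b)/2 = a + b by omega, show (2*a)/2 = a by omega]

lemma aCoeff_oe (a b : ℕ) : aCoeff (2*a+1) (2*b) = ((a+b).choose a : ℚ) := by
  rw [aCoeff, if_neg (by rintro ⟨⟨c,hc⟩,⟨d,hd⟩⟩; omega),
    show (2*a+1 + 2*b)/2 = a + b by omega, show (2*a+1)/2 = a by omega]

lemma aCoeff_eo (a b : ℕ) : aCoeff (2*a) (2*b+1) = ((a+b).choose a : ℚ) := by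
  rw [aCoeff, if_neg (by rintro ⟨⟨c,hc⟩,⟨d,hd⟩⟩; omega),
    show (2*a + (2*b+1))/2 = a + b by omega, show (2*a)/2 = a by omega]

lemma aCoeff_oo (a b : ℕ) : aCoeff (2*a+1) (2*b+1) = 0 := by
  rw [aCoeff, if_pos ⟨⟨a, by ring⟩, ⟨b, by ring⟩⟩]

lemma chooseQ_pascal (a b : ℕ) (ha : 1 ≤ a) (hb : 1 ≤ b) :
    ((a+b).choose a : ℚ) - ((a-1+b).choose (a-1) : ℕ)
      - ((a+(b-1)).choose a : ℕ) = 0 := by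
  obtain ⟨a, rfl⟩ := Nat.exists_eq_add_of_le ha
  obtain ⟨b, rfl⟩ := Nat.exists_eq_add_of_le hb
  rw [show 1+a-1 = a by omega, show 1+b-1 = b by omega,
    show 1+a+(1+b) = (a+b)+1+1 by ring, show a+(1+b) = (a+b)+1 by ring,
    show 1+a+b = (a+b)+1 by ring, show 1+a = a+1 by ring, Nat.choose_succ_succ]
  push_cast
  ring

lemma key (r s : ℕ) :
    aCoeff r s - (if 2 ≤ r then aCoeff (r-2) s else 0)
      - (if 2 ≤ s then aCoeff r (s-2) else 0)
      = (if r = 0 ∧ s = 0 then 1 else 0) + (if r = 1 ∧ s = 0 then 1 else 0)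
        + (if r = 0 ∧ s = 1 then 1 else 0) := by
  obtain ⟨a, ha | ha⟩ := Nat.even_or_odd' r <;>
    obtain ⟨b, hb | hb⟩ := Nat.even_or_odd' s <;> subst ha hb <;>
    by_cases h2a : 1 ≤ a <;> by_cases h2b : 1 ≤ b
  all_goals try (have ha0 : a = 0 := by omega
                 subst ha0)
  all_goals try (have hb0 : b = 0 := by omega
                 subst hb0)
  -- EE
  · rw [if_pos (by omega : 2 ≤ 2*a), if_pos (by omega : 2 ≤ 2*b),
      show 2*a-2 = 2*(a-1) by omega, show 2*b-2 = 2*(b-1) by omega,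
      aCoeff_ee, aCoeff_ee, aCoeff_ee,
      if_neg (by omega), if_neg (by omega), if_neg (by omega)]
    simpa using chooseQ_pascal a b h2a h2b
  · rw [if_pos (by omega : 2 ≤ 2*a), if_neg (by omega : ¬ 2 ≤ 2*0),
      show 2*a-2 = 2*(a-1) by omega, aCoeff_ee, aCoeff_ee,
      if_neg (by omega), if_neg (by omega), if_neg (by omega)]
    simp [Nat.choose_self]
  · rw [if_neg (by omega : ¬ 2 ≤ 2*0), if_pos (by omega : 2 ≤ 2*b),
      show 2*b-2 = 2*(b-1) by omega, aCoeff_ee, aCoeff_ee,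
      if_neg (by omega), if_neg (by omega), if_neg (by omega)]
    simp
  · norm_num [aCoeff]
  -- EO
  · rw [if_pos (by omega : 2 ≤ 2*a), if_pos (by omega : 2 ≤ 2*b+1),
      show 2*a-2 = 2*(a-1) by omega, show 2*b+1-2 = 2*(b-1)+1 by omega,
      aCoeff_eo, aCoeff_eo, aCoeff_eo,
      if_neg (by omega), if_neg (by omega), if_neg (by omega)]
    simpa using chooseQ_pascal a b h2a h2b
  · rw [if_pos (by omega : 2 ≤ 2*a), if_neg (by omega : ¬ 2 ≤ 2*0+1),
      show 2*a-2 = 2*(a-1) by omega, aCoeff_eo, aCoeff_eo,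
      if_neg (by omega), if_neg (by omega), if_neg (by omega)]
    simp [Nat.choose_self]
  · rw [if_neg (by omega : ¬ 2 ≤ 2*0), if_pos (by omega : 2 ≤ 2*b+1),
      show 2*b+1-2 = 2*(b-1)+1 by omega, aCoeff_eo, aCoeff_eo,
      if_neg (by omega), if_neg (by omega), if_neg (by omega)]
    simp
  · rw [if_neg (by omega : ¬ 2 ≤ 2*0), if_neg (by omega : ¬ 2 ≤ 2*0+1),
      aCoeff_eo, if_neg (by omega), if_neg (by omega), if_pos (by omega)]
    simp
  -- OE
  · rw [if_pos (by omega : 2 ≤ 2*a+1), if_pos (by omega : 2 ≤ 2*b),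
      show 2*a+1-2 = 2*(a-1)+1 by omega, show 2*b-2 = 2*(b-1) by omega,
      aCoeff_oe, aCoeff_oe, aCoeff_oe,
      if_neg (by omega), if_neg (by omega), if_neg (by omega)]
    simpa using chooseQ_pascal a b h2a h2b
  · rw [if_pos (by omega : 2 ≤ 2*a+1), if_neg (by omega : ¬ 2 ≤ 2*0),
      show 2*a+1-2 = 2*(a-1)+1 by omega, aCoeff_oe, aCoeff_oe,
      if_neg (by omega), if_neg (by omega), if_neg (by omega)]
    simp [Nat.choose_self]
  · rw [if_neg (by omega : ¬ 2 ≤ 2*0+1), if_pos (by omega : 2 ≤ 2*b),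
      show 2*b-2 = 2*(b-1) by omega, aCoeff_oe, aCoeff_oe,
      if_neg (by omega), if_neg (by omega), if_neg (by omega)]
    simp
  · rw [if_neg (by omega : ¬ 2 ≤ 2*0+1), if_neg (by omega : ¬ 2 ≤ 2*0),
      aCoeff_oe, if_neg (by omega), if_pos (by omega), if_neg (by omega)]
    simp
  -- OO
  · rw [if_pos (by omega : 2 ≤ 2*a+1), if_pos (by omega : 2 ≤ 2*b+1),
      show 2*a+1-2 = 2*(a-1)+1 by omega, show 2*b+1-2 = 2*(b-1)+1 by omega,
      aCoeff_oo, aCoeff_oo, aCoeff_oo,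
      if_neg (by omega), if_neg (by omega), if_neg (by omega)]
    simp
  · rw [if_pos (by omega : 2 ≤ 2*a+1), if_neg (by omega : ¬ 2 ≤ 2*0+1),
      show 2*a+1-2 = 2*(a-1)+1 by omega, aCoeff_oo, aCoeff_oo,
      if_neg (by omega), if_neg (by omega), if_neg (by omega)]
    simp
  · rw [if_neg (by omega : ¬ 2 ≤ 2*0+1), if_pos (by omega : 2 ≤ 2*b+1),
      show 2*b+1-2 = 2*(b-1)+1 by omega, aCoeff_oo, aCoeff_oo,
      if_neg (by omega), if_neg (by omega), if_neg (by omega)]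
    simp
  · rw [if_neg (by omega : ¬ 2 ≤ 2*0+1), if_neg (by omega : ¬ 2 ≤ 2*0+1),
      aCoeff_oo, if_neg (by omega), if_neg (by omega), if_neg (by omega)]
    simp

/-- `Σ a_{r,s} x^r y^s = (1 + x + y)/(1 - x² - y²)`, stated as the identity
`(Σ a_{r,s} x^r y^s) · (1 - x² - y²) = 1 + x + y` of formal power series. -/
theorem stmt7 :
    genF * (1 - (X 0 : MvPowerSeries (Fin 2) ℚ) ^ 2 - (X 1) ^ 2)
      = 1 + X 0 + X 1 := by
  ext d
  have hd : ∀ (e : Fin 2 →₀ ℕ), (d = e) = (d 0 = e 0 ∧ d 1 = e 1) := by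
    intro e
    apply propext
    constructor
    · rintro rfl; exact ⟨rfl, rfl⟩
    · rintro ⟨h0, h1⟩
      ext i
      fin_cases i
      · exact h0
      · exact h1
  rw [mul_sub, mul_sub, mul_one, map_sub, map_sub, map_add, map_add,
    X_pow_eq, X_pow_eq, coeff_mul_monomial, coeff_mul_monomial,
    coeff_one, coeff_X, coeff_X]
  simp only [coeff_apply, genF, mul_one, Finsupp.single_le_iff,
    Finsupp.sub_apply, Finsupp.single_apply, hd, Finsupp.coe_zero, Pi.zero_apply,
    show ((0:Fin 2) = 1) = False from by simp, show ((1:Fin 2) = 0) = False from by simp,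
    if_true, if_false]
  simpa using key (d 0) (d 1)
end

section
/- The total number of ballot sequences of length n, i.e., sequences α ∈ {0,1}^n with Σ_{i=1}^r a_i ≤ r/2 for all r, equals the central binomial coefficient C(n, ⌊n/2⌋). -/
/-- `α ∈ {0,1}^n` is a ballot sequence if every prefix of length `r` contains at
most `r/2` ones. -/
def IsBallot {n : ℕ} (α : Fin n → Bool) : Prop :=
  ∀ r : ℕ, r ≤ n →
    2 * (Finset.univ.filter (fun i : Fin n => (i : ℕ) < r ∧ α i = true)).card ≤ r
attribute [local instance] Classical.propDecidable

/-!
Let `B(n, m)` count the ballot sequences of length `n` with at most `m` ones. Removing the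
last letter gives Pascal's recurrence `B(n+1, m+1) = B(n, m+1) + B(n, m)` as long as
`2(m+1) ≤ n+1`, hence `B(n, m) = C(n, m)` whenever `2m ≤ n`. The one boundary case is
`n = 2m+1`, where the ballot condition forces at most `m` ones, so `B(n, m+1) = B(n, m)`,
matching `C(2m+1, m+1) = C(2m+1, m)`. Finally every ballot sequence has at most `⌊n/2⌋` ones.
-/

open Finset

theorem Fin.card_filter_snoc {α : Type*} [Fintype α] {n : ℕ} (P : (Fin (n + 1) → α) → Prop)
    [DecidablePred P] :
    #{f | P f} = ∑ a, #{g : Fin n → α | P (Fin.snoc g a)} := by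
  simp only [card_filter]
  rw [← (Fin.snocEquiv fun _ => α).sum_comp, Fintype.sum_prod_type]
  rfl

def onesBefore {n : ℕ} (α : Fin n → Bool) (r : ℕ) : ℕ :=
  #{i : Fin n | (i : ℕ) < r ∧ α i = true}

def ones {n : ℕ} (α : Fin n → Bool) : ℕ := #{i | α i = true}

theorem isBallot_iff {n : ℕ} (α : Fin n → Bool) :
    IsBallot α ↔ ∀ r ≤ n, 2 * onesBefore α r ≤ r :=
  Iff.rfl

theorem onesBefore_snoc {n r : ℕ} (β : Fin n → Bool) (b : Bool) (hr : r ≤ n) :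
    onesBefore (Fin.snoc β b) r = onesBefore β r := by
  simp only [onesBefore, card_filter, Fin.sum_univ_castSucc, Fin.snoc_castSucc, Fin.val_castSucc,
    Fin.val_last, Fin.snoc_last, not_lt.2 hr, false_and, if_false, add_zero]

theorem onesBefore_self {n : ℕ} (α : Fin n → Bool) : onesBefore α n = ones α := by
  simp [onesBefore, ones]

theorem ones_snoc {n : ℕ} (β : Fin n → Bool) (b : Bool) :
    ones (Fin.snoc β b) = ones β + b.toNat := by
  cases b <;>
    simp only [ones, card_filter, Fin.sum_univ_castSucc, Fin.snoc_castSucc, Fin.snoc_last] <;> simp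

theorem isBallot_snoc {n : ℕ} (β : Fin n → Bool) (b : Bool) :
    IsBallot (Fin.snoc β b) ↔ IsBallot β ∧ 2 * (ones β + b.toNat) ≤ n + 1 := by
  simp only [isBallot_iff]
  refine ⟨fun h => ⟨fun r hr => ?_, ?_⟩, fun ⟨hβ, hlast⟩ r hr => ?_⟩
  · simpa only [onesBefore_snoc β b hr] using h r (by omega)
  · simpa only [onesBefore_self, ones_snoc] using h (n + 1) le_rfl
  · obtain hr | rfl := Nat.le_succ_iff.1 hr
    · simpa only [onesBefore_snoc β b hr] using hβ r hr
    · simpa only [onesBefore_self, ones_snoc] using hlast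

theorem IsBallot.two_mul_ones_le {n : ℕ} {α : Fin n → Bool} (h : IsBallot α) :
    2 * ones α ≤ n :=
  onesBefore_self α ▸ (isBallot_iff α).1 h n le_rfl

noncomputable def ballotCount (n m : ℕ) : ℕ :=
  #{α : Fin n → Bool | IsBallot α ∧ ones α ≤ m}

theorem ballotCount_succ {n m : ℕ} (hm : 2 * m ≤ n + 1) :
    ballotCount (n + 1) m =
      ballotCount n m + #{β : Fin n → Bool | IsBallot β ∧ ones β + 1 ≤ m} := by
  unfold ballotCount
  rw [Fin.card_filter_snoc, Fintype.sum_bool, add_comm]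
  simp only [isBallot_snoc, ones_snoc, Bool.toNat_true, Bool.toNat_false, add_zero]
  congr 1 <;> refine congrArg card <| filter_congr fun β _ =>
    ⟨fun h => ⟨h.1.1, h.2⟩, fun h => ⟨⟨h.1, ?_⟩, h.2⟩⟩
  · have := h.1.two_mul_ones_le
    omega
  · omega

theorem ballotCount_succ_zero (n : ℕ) : ballotCount (n + 1) 0 = ballotCount n 0 := by
  simp [ballotCount_succ]

theorem ballotCount_succ_succ {n m : ℕ} (hm : 2 * (m + 1) ≤ n + 1) :
    ballotCount (n + 1) (m + 1) = ballotCount n (m + 1) + ballotCount n m := by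
  simp only [ballotCount_succ hm, Nat.add_le_add_iff_right]
  rfl

theorem ballotCount_zero_zero : ballotCount 0 0 = 1 := by
  simp [ballotCount, isBallot_iff, onesBefore, ones]

theorem ballotCount_eq_card_isBallot {n m : ℕ} (h : n ≤ 2 * m + 1) :
    ballotCount n m = #{α : Fin n → Bool | IsBallot α} := by
  refine congrArg card (filter_congr fun α _ => ⟨And.left, fun hα => ⟨hα, ?_⟩⟩)
  have := hα.two_mul_ones_le
  omega

theorem ballotCount_eq_choose {n m : ℕ} (h : 2 * m ≤ n) : ballotCount n m = n.choose m := by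
  induction n generalizing m with
  | zero =>
    obtain rfl : m = 0 := by omega
    exact ballotCount_zero_zero
  | succ n ih =>
    cases m with
    | zero =>
      rw [ballotCount_succ_zero, ih (by omega), Nat.choose_zero_right, Nat.choose_zero_right]
    | succ m =>
      rw [ballotCount_succ_succ h, ih (m := m) (by omega), Nat.choose_succ_succ', add_comm]
      congr 1
      obtain h' | rfl : 2 * (m + 1) ≤ n ∨ n = 2 * m + 1 := by omega
      · exact ih h'
      · rw [ballotCount_eq_card_isBallot (m := m + 1) (by omega),
          ← ballotCount_eq_card_isBallot (m := m) le_rfl,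
          ih (by omega), Nat.choose_symm_half]

/-- The total number of ballot sequences of length `n` is the central binomial
coefficient `C(n, ⌊n/2⌋)`. -/
theorem stmt10 (n : ℕ) :
    (Finset.univ.filter (fun α : Fin n → Bool => IsBallot α)).card
      = n.choose (n / 2) := by
  rw [← ballotCount_eq_card_isBallot (m := n / 2) (by omega)]
  exact ballotCount_eq_choose (by omega)
end

section
/- In the exterior algebra on n generators, for any non-crossing pairing C = ((i_1,j_1),...,(i_k,j_k)), the element Δ_C = Π_r (θ_{j_r} - θ_{i_r}) satisfies (Σ_{1 ≤ i < j ≤ n} ∂_{θ_j} ∂_{θ_i}) Δ_C = 0. -/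
/-!
Write `Δ_C = (θ_b - θ_a) Δ'`, where `(a, b)` is the first pair and `Δ'` is the product over the
remaining pairs, which form a non-crossing pairing again. Applying `∂_j ∂_i` to `v x` with
`v = θ_b - θ_a` gives `v_i ∂_j x - v_j ∂_i x + v ∂_j ∂_i x`; summed over `i < j`, the last terms
give `v · (Σ ∂_j ∂_i) Δ' = 0` by induction. In the first-order terms the coefficient of `∂_c Δ'`
vanishes unless `a ≤ c ≤ b`, while for such `c` we have `∂_c Δ' = 0`: non-crossing means every
other pair lies to the right of `(a, b)` or encloses it, so `θ_c` does not occur in `Δ'`.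
-/

open ExteriorAlgebra

/-- The interior-product operator `∂_{θ_i}` on `Λ(ℚ^n)`: left contraction with the
`i`-th coordinate functional.  On monomials it satisfies
`∂_{θ_i}(θ_A) = (-1)^{#{j ∈ A : j < i}} θ_{A∖{i}}` if `i ∈ A` and `0` otherwise. -/
noncomputable def pd (n : ℕ) (i : Fin n) :
    ExteriorAlgebra ℚ (Fin n → ℚ) →ₗ[ℚ] ExteriorAlgebra ℚ (Fin n → ℚ) :=
  CliffordAlgebra.contractLeft (Q := (0 : QuadraticForm ℚ (Fin n → ℚ)))
    (LinearMap.proj i)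

/-- `C = ((i_1,j_1),…,(i_k,j_k))` is a non-crossing pairing: `i_r < j_r`, and any two
pairs are either disjoint (`i_r < j_r < i_s < j_s`) or nested (`i_s < i_r < j_r < j_s`). -/
def IsNonCrossingPairing {n k : ℕ} (C : Fin k → Fin n × Fin n) : Prop :=
  (∀ r, (C r).1 < (C r).2) ∧
  ∀ r s : Fin k, r < s →
    ((C r).1 < (C r).2 ∧ (C r).2 < (C s).1 ∧ (C s).1 < (C s).2) ∨
    ((C s).1 < (C r).1 ∧ (C r).1 < (C r).2 ∧ (C r).2 < (C s).2)

/-- `Δ_C = (θ_{j_1} - θ_{i_1})(θ_{j_2} - θ_{i_2}) ⋯ (θ_{j_k} - θ_{i_k})`. -/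
noncomputable def DeltaC {n k : ℕ} (C : Fin k → Fin n × Fin n) :
    ExteriorAlgebra ℚ (Fin n → ℚ) :=
  (List.ofFn (fun r => theta n (C r).2 - theta n (C r).1)).prod

namespace CliffordAlgebra

variable {R M : Type*} [CommRing R] [AddCommGroup M] [Module R M] {Q : QuadraticForm R M}

theorem contractLeft_contractLeft_ι_mul (d d' : Module.Dual R M) (m : M)
    (x : CliffordAlgebra Q) :
    contractLeft d' (contractLeft d (ι Q m * x)) =
      d m • contractLeft d' x - d' m • contractLeft d x +
        ι Q m * contractLeft d' (contractLeft d x) := by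
  rw [contractLeft_ι_mul, map_sub, map_smul, contractLeft_ι_mul]
  abel

theorem contractLeft_prod_map_ι_eq_zero (d : Module.Dual R M) :
    ∀ L : List M, (∀ m ∈ L, d m = 0) → contractLeft d (L.map (ι Q)).prod = 0
  | [], _ => contractLeft_one (Q := Q) d
  | m :: L, hL => by
    rw [List.map_cons, List.prod_cons, contractLeft_ι_mul, hL m List.mem_cons_self,
      contractLeft_prod_map_ι_eq_zero d L fun v hv => hL v (List.mem_cons_of_mem _ hv),
      zero_smul, mul_zero, sub_zero]

end CliffordAlgebra

section OrderedSums

variable {ι R M : Type*} [LinearOrder ι] [Ring R] [AddCommGroup M] [Module R M]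

theorem Finset.sum_single_sub_single_eq_zero {s : Finset ι} {a b : ι} (r : R)
    (h : a ∈ s ↔ b ∈ s) : ∑ i ∈ s, (Pi.single b r - Pi.single a r : ι → R) i = 0 := by
  simp only [Pi.sub_apply, Finset.sum_sub_distrib, Finset.sum_pi_single', h, sub_self]

variable [Fintype ι]

theorem Finset.sum_filter_lt_eq_sum_sum_lt (f : ι → ι → M) :
    ∑ p ∈ univ.filter (fun p : ι × ι => p.1 < p.2), f p.1 p.2 =
      ∑ j, ∑ i ∈ univ.filter (· < j), f i j := by
  rw [Finset.sum_filter, Fintype.sum_prod_type, Finset.sum_comm]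
  simp only [Finset.sum_filter]

theorem Finset.sum_filter_lt_eq_sum_sum_gt (f : ι → ι → M) :
    ∑ p ∈ univ.filter (fun p : ι × ι => p.1 < p.2), f p.1 p.2 =
      ∑ i, ∑ j ∈ univ.filter (i < ·), f i j := by
  rw [Finset.sum_filter, Fintype.sum_prod_type]
  simp only [Finset.sum_filter]

theorem sum_lt_single_sub_single_smul_eq_zero {a b : ι} (hab : a < b) (g : ι → M)
    (hg : ∀ c, a ≤ c → c ≤ b → g c = 0) :
    ∑ p ∈ Finset.univ.filter (fun p : ι × ι => p.1 < p.2),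
      ((Pi.single b 1 - Pi.single a 1 : ι → R) p.1 • g p.2 -
        (Pi.single b 1 - Pi.single a 1 : ι → R) p.2 • g p.1) = 0 := by
  set m : ι → R := Pi.single b 1 - Pi.single a 1
  have left : ∀ j, (∑ i ∈ Finset.univ.filter (· < j), m i) • g j = 0 := by
    intro j
    by_cases hj : a ≤ j ∧ j ≤ b
    · rw [hg j hj.1 hj.2, smul_zero]
    · rw [Finset.sum_single_sub_single_eq_zero, zero_smul]
      simp only [Finset.mem_filter, Finset.mem_univ, true_and]
      grind
  have right : ∀ i, (∑ j ∈ Finset.univ.filter (i < ·), m j) • g i = 0 := by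
    intro i
    by_cases hi : a ≤ i ∧ i ≤ b
    · rw [hg i hi.1 hi.2, smul_zero]
    · rw [Finset.sum_single_sub_single_eq_zero, zero_smul]
      simp only [Finset.mem_filter, Finset.mem_univ, true_and]
      grind
  rw [Finset.sum_sub_distrib, Finset.sum_filter_lt_eq_sum_sum_lt (fun i j => m i • g j),
    Finset.sum_filter_lt_eq_sum_sum_gt (fun i j => m j • g i)]
  simp only [← Finset.sum_smul, left, right, Finset.sum_const_zero, sub_zero]

end OrderedSums

theorem theta_sub_theta (n : ℕ) (i j : Fin n) :
    theta n j - theta n i = ExteriorAlgebra.ι ℚ (Pi.single j 1 - Pi.single i 1) := by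
  rw [theta, theta, map_sub]

theorem DeltaC_eq_prod_map_ι {n k : ℕ} (C : Fin k → Fin n × Fin n) :
    DeltaC C = ((List.ofFn fun r => (Pi.single (C r).2 1 - Pi.single (C r).1 1 : Fin n → ℚ)).map
      (ExteriorAlgebra.ι ℚ)).prod := by
  simp only [DeltaC, List.map_ofFn, Function.comp_def, theta_sub_theta]

theorem DeltaC_succ {n k : ℕ} (C : Fin (k + 1) → Fin n × Fin n) :
    DeltaC C = ExteriorAlgebra.ι ℚ (Pi.single (C 0).2 1 - Pi.single (C 0).1 1) *
      DeltaC (Fin.tail C) := by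
  rw [DeltaC, List.ofFn_succ, List.prod_cons, theta_sub_theta]
  rfl

theorem pd_pd_ι_mul {n : ℕ} (i j : Fin n) (m : Fin n → ℚ) (x : ExteriorAlgebra ℚ (Fin n → ℚ)) :
    pd n j (pd n i (ExteriorAlgebra.ι ℚ m * x)) =
      m i • pd n j x - m j • pd n i x + ExteriorAlgebra.ι ℚ m * pd n j (pd n i x) :=
  CliffordAlgebra.contractLeft_contractLeft_ι_mul _ _ m x

theorem pd_DeltaC_eq_zero {n k : ℕ} (C : Fin k → Fin n × Fin n) {c : Fin n}
    (hc : ∀ r, c ≠ (C r).1 ∧ c ≠ (C r).2) : pd n c (DeltaC C) = 0 := by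
  rw [DeltaC_eq_prod_map_ι]
  refine CliffordAlgebra.contractLeft_prod_map_ι_eq_zero _ _ fun v hv => ?_
  obtain ⟨r, rfl⟩ := List.mem_ofFn.1 hv
  simp [Pi.single_eq_of_ne (hc r).1, Pi.single_eq_of_ne (hc r).2]

namespace IsNonCrossingPairing

variable {n k : ℕ}

theorem tail {C : Fin (k + 1) → Fin n × Fin n} (hC : IsNonCrossingPairing C) :
    IsNonCrossingPairing (Fin.tail C) :=
  ⟨fun r => hC.1 r.succ, fun r s hrs => hC.2 r.succ s.succ (Fin.succ_lt_succ_iff.2 hrs)⟩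

theorem ne_of_mem_Icc_head {C : Fin (k + 1) → Fin n × Fin n} (hC : IsNonCrossingPairing C)
    {c : Fin n} (hac : (C 0).1 ≤ c) (hcb : c ≤ (C 0).2) (r : Fin k) :
    c ≠ (Fin.tail C r).1 ∧ c ≠ (Fin.tail C r).2 := by
  rcases hC.2 0 r.succ (Fin.succ_pos r) with ⟨-, h₂, h₃⟩ | ⟨h₁, -, h₃⟩
  · exact ⟨(hcb.trans_lt h₂).ne, (hcb.trans_lt (h₂.trans h₃)).ne⟩
  · exact ⟨(h₁.trans_le hac).ne', (hcb.trans_lt h₃).ne⟩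

end IsNonCrossingPairing

theorem sum_pd_pd_DeltaC_eq_zero {n : ℕ} :
    ∀ {k : ℕ} (C : Fin k → Fin n × Fin n), IsNonCrossingPairing C →
      ∑ p ∈ Finset.univ.filter (fun p : Fin n × Fin n => p.1 < p.2),
        pd n p.2 (pd n p.1 (DeltaC C)) = 0
  | 0, C, _ => by simp [DeltaC, pd, CliffordAlgebra.contractLeft_one]
  | k + 1, C, hC => by
    have vanish (c : Fin n) (hac : (C 0).1 ≤ c) (hcb : c ≤ (C 0).2) :
        pd n c (DeltaC (Fin.tail C)) = 0 :=
      pd_DeltaC_eq_zero _ (hC.ne_of_mem_Icc_head hac hcb)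
    simp only [DeltaC_succ C, pd_pd_ι_mul, Finset.sum_add_distrib, ← Finset.mul_sum]
    rw [sum_pd_pd_DeltaC_eq_zero (Fin.tail C) hC.tail, mul_zero, add_zero]
    exact sum_lt_single_sub_single_smul_eq_zero (hC.1 0) _ vanish

/-- For any non-crossing pairing `C`, `(Σ_{1 ≤ i < j ≤ n} ∂_{θ_j} ∂_{θ_i}) Δ_C = 0`. -/
theorem stmt12 {n k : ℕ} (C : Fin k → Fin n × Fin n)
    (hC : IsNonCrossingPairing C) :
    (∑ p ∈ Finset.univ.filter (fun p : Fin n × Fin n => p.1 < p.2),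
        pd n p.2 ∘ₗ pd n p.1) (DeltaC C) = 0 := by
  rw [LinearMap.coe_sum, Finset.sum_apply]
  exact sum_pd_pd_DeltaC_eq_zero C hC
end

section
/- In the exterior algebra on 4 generators, the elements (θ_2 - θ_1)(θ_4 - θ_3) and (θ_3 - θ_2)(θ_4 - θ_1) are annihilated by D_1 = Σ_{i=1}^4 ∂_{θ_i} and D_2 = Σ_{1≤i<j≤4} ∂_{θ_j}∂_{θ_i}, but (θ_3 - θ_1)(θ_4 - θ_2) is not annihilated by D_2. -/
open ExteriorAlgebra

lemma pd_theta (n : ℕ) (i j : Fin n) :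
    pd n i (theta n j) = algebraMap ℚ _ (if i = j then 1 else 0) := by
  simp [pd, theta, ExteriorAlgebra.ι, CliffordAlgebra.contractLeft_ι, Pi.single_apply,
    eq_comm]

lemma pd_theta_mul (n : ℕ) (i j : Fin n) (x : ExteriorAlgebra ℚ (Fin n → ℚ)) :
    pd n i (theta n j * x) = (if i = j then (1:ℚ) else 0) • x - theta n j * pd n i x := by
  simp [pd, theta, ExteriorAlgebra.ι, CliffordAlgebra.contractLeft_ι_mul, Pi.single_apply,
    eq_comm]

lemma pd_tt (i a b : Fin 4) :
    pd 4 i (theta 4 a * theta 4 b) =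
      (if i = a then theta 4 b else 0) - (if i = b then theta 4 a else 0) := by
  rw [pd_theta_mul, pd_theta]
  split_ifs <;>
    simp [Algebra.algebraMap_eq_smul_one, mul_smul_comm]

lemma pd2_tt (j i a b : Fin 4) :
    pd 4 j (pd 4 i (theta 4 a * theta 4 b)) =
      algebraMap ℚ _ (((if i = a then 1 else 0) * (if j = b then 1 else 0)) -
        ((if i = b then 1 else 0) * (if j = a then 1 else 0))) := by
  rw [pd_tt, map_sub]
  simp only [apply_ite (pd 4 j), pd_theta, map_zero]
  split_ifs <;> simp_all

lemma D1_tt (a b : Fin 4) :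
    (∑ i : Fin 4, pd 4 i) (theta 4 a * theta 4 b) = theta 4 b - theta 4 a := by
  simp [LinearMap.sum_apply, pd_tt, Finset.sum_sub_distrib, Finset.sum_ite_eq]

set_option maxRecDepth 10000 in
lemma D2_tt (a b : Fin 4) :
    (∑ p ∈ Finset.univ.filter (fun p : Fin 4 × Fin 4 => p.1 < p.2),
      pd 4 p.2 ∘ₗ pd 4 p.1) (theta 4 a * theta 4 b) =
      algebraMap ℚ _ ((if a < b then 1 else 0) - (if b < a then 1 else 0)) := by
  simp only [LinearMap.sum_apply, LinearMap.comp_apply, pd2_tt]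
  rw [← map_sum (algebraMap ℚ (ExteriorAlgebra ℚ (Fin 4 → ℚ)))]
  congr 1
  rw [Finset.sum_filter]
  fin_cases a <;> fin_cases b <;>
    simp only [show (⟨0, by omega⟩ : Fin 4) = 0 from rfl, show (⟨1, by omega⟩ : Fin 4) = 1 from rfl,
      show (⟨2, by omega⟩ : Fin 4) = 2 from rfl, show (⟨3, by omega⟩ : Fin 4) = 3 from rfl] <;>
    simp [Fintype.sum_prod_type, Fin.sum_univ_four]

lemma expand_prod (a b c d : Fin 4) :
    (theta 4 b - theta 4 a) * (theta 4 d - theta 4 c) =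
      theta 4 b * theta 4 d - theta 4 b * theta 4 c - theta 4 a * theta 4 d +
        theta 4 a * theta 4 c := by
  noncomm_ring


/-- In `Λ(ℚ^4)`: `(θ_2-θ_1)(θ_4-θ_3)` and `(θ_3-θ_2)(θ_4-θ_1)` are annihilated by
`D_1 = Σ_i ∂_{θ_i}` and `D_2 = Σ_{i<j} ∂_{θ_j}∂_{θ_i}`, but `(θ_3-θ_1)(θ_4-θ_2)` is
not annihilated by `D_2`. -/
theorem stmt13 :
    let θ : Fin 4 → ExteriorAlgebra ℚ (Fin 4 → ℚ) := theta 4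
    let D1 := ∑ i : Fin 4, pd 4 i
    let D2 := ∑ p ∈ Finset.univ.filter (fun p : Fin 4 × Fin 4 => p.1 < p.2),
        pd 4 p.2 ∘ₗ pd 4 p.1
    D1 ((θ 1 - θ 0) * (θ 3 - θ 2)) = 0 ∧
    D2 ((θ 1 - θ 0) * (θ 3 - θ 2)) = 0 ∧
    D1 ((θ 2 - θ 1) * (θ 3 - θ 0)) = 0 ∧
    D2 ((θ 2 - θ 1) * (θ 3 - θ 0)) = 0 ∧
    D2 ((θ 2 - θ 0) * (θ 3 - θ 1)) ≠ 0 := by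
  intro θ D1 D2
  refine ⟨?_, ?_, ?_, ?_, ?_⟩
  · show (∑ i : Fin 4, pd 4 i) ((theta 4 1 - theta 4 0) * (theta 4 3 - theta 4 2)) = 0
    rw [expand_prod]
    simp only [map_sub, map_add, D1_tt]
    abel
  · show (∑ p ∈ Finset.univ.filter (fun p : Fin 4 × Fin 4 => p.1 < p.2),
        pd 4 p.2 ∘ₗ pd 4 p.1) ((theta 4 1 - theta 4 0) * (theta 4 3 - theta 4 2)) = 0
    rw [expand_prod]
    simp (config := { decide := true }) only [map_sub, map_add, D2_tt]
    norm_num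
  · show (∑ i : Fin 4, pd 4 i) ((theta 4 2 - theta 4 1) * (theta 4 3 - theta 4 0)) = 0
    rw [expand_prod]
    simp only [map_sub, map_add, D1_tt]
    abel
  · show (∑ p ∈ Finset.univ.filter (fun p : Fin 4 × Fin 4 => p.1 < p.2),
        pd 4 p.2 ∘ₗ pd 4 p.1) ((theta 4 2 - theta 4 1) * (theta 4 3 - theta 4 0)) = 0
    rw [expand_prod]
    simp (config := { decide := true }) only [map_sub, map_add, D2_tt]
    norm_num
  · show (∑ p ∈ Finset.univ.filter (fun p : Fin 4 × Fin 4 => p.1 < p.2),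
        pd 4 p.2 ∘ₗ pd 4 p.1) ((theta 4 2 - theta 4 0) * (theta 4 3 - theta 4 1)) ≠ 0
    rw [expand_prod]
    simp (config := { decide := true }) only [map_sub, map_add, D2_tt]
    intro h
    have h2 : algebraMap ℚ (ExteriorAlgebra ℚ (Fin 4 → ℚ)) 2 = algebraMap ℚ _ 0 := by
      rw [map_ofNat]
      norm_num at h ⊢
      linear_combination (norm := module) h
    exact two_ne_zero ((algebraMap ℚ (ExteriorAlgebra ℚ (Fin 4 → ℚ))).injective h2)
end

section
/- If α ∈ {0,1}^n breaks the ballot condition (i.e., some prefix of length r has more than r/2 ones), then G_α lies in the two-sided ideal I_n of the exterior algebra generated by F_1, F_2, ..., F_n. -/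
open ExteriorAlgebra

attribute [local instance] Classical.propDecidable

/-- Number of ones in `α` among the first `p` positions (0-indexed). -/
def onesBelow {n : ℕ} (α : Fin n → Bool) (p : ℕ) : ℕ :=
  (Finset.univ.filter (fun i : Fin n => (i : ℕ) < p ∧ α i = true)).card

/-- `G : ({0,1}^n → Λ(ℚ^n))` satisfies the defining recursion of the `G_α`:
`G_{1^s 0^{n-s}} = F_s`, and for a word `u 0 1^s 0^{n-k-s}` (here `u = β` on the
`p = k-1` first 0-indexed positions, the distinguished `0` at 0-indexed position `p`,
then a block of `s ≥ 1` ones),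
`G_{u01^s0^{n-k-s}} = G_{u1^s0^{n-k-s+1}} - (-1)^{m_1(u)} θ_k G_{u1^{s-1}0^{n-k-s+2}}`. -/
def GRec (n : ℕ) (G : (Fin n → Bool) → ExteriorAlgebra ℚ (Fin n → ℚ)) : Prop :=
  (∀ s : ℕ, s ≤ n → G (fun i => decide ((i : ℕ) < s)) = Fq n s) ∧
  (∀ (β : Fin n → Bool) (p s : ℕ) (hs : 1 ≤ s) (hps : p + s < n),
    G (fun i => if (i : ℕ) < p then β i else decide (p < (i : ℕ) ∧ (i : ℕ) ≤ p + s))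
    = G (fun i => if (i : ℕ) < p then β i else decide ((i : ℕ) < p + s))
      - ((-1 : ℚ) ^ onesBelow β p) •
        (theta n ⟨p, by omega⟩ *
          G (fun i => if (i : ℕ) < p then β i else decide ((i : ℕ) < p + s - 1))))
/-- `α` breaks the ballot condition: some prefix of length `r` has more than `r/2` ones. -/
def BreaksBallot {n : ℕ} (α : Fin n → Bool) : Prop :=
  ∃ r : ℕ, r ≤ n ∧ r < 2 * onesBelow α r

/-!
Every word is `u 1^(t-p) 0^(n-t)` with `u` a prefix of length `p`; induct on `p`. For `p = 0`
the word is `1^t 0^(n-t)`, so `G = F_t`, and breaking the ballot condition forces `t ≥ 1`.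
If the last letter of `u` is a one, it joins the block of ones and the prefix shrinks. If it is
a zero, the defining recursion writes `G_{u'01^s0^…}` as `G_{u'1^s0^…} ∓ θ_p G_{u'1^(s-1)0^…}`;
both words have a shorter prefix and still break the ballot condition, since their blocks of
ones start one letter earlier.
-/

variable {n : ℕ}

lemma onesBelow_zero (α : Fin n → Bool) : onesBelow α 0 = 0 := by
  simp [onesBelow]

lemma onesBelow_succ (α : Fin n → Bool) {r : ℕ} (hr : r < n) :
    onesBelow α (r + 1) = onesBelow α r + (α ⟨r, hr⟩).toNat := by
  have hlast : (α ⟨r, hr⟩).toNat = ∑ i, if i = ⟨r, hr⟩ then (α i).toNat else 0 := by simp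
  unfold onesBelow
  rw [Finset.card_filter, Finset.card_filter, hlast, ← Finset.sum_add_distrib]
  refine Finset.sum_congr rfl fun i _ => ?_
  rcases Nat.lt_trichotomy i r with h | h | h
  · have : i ≠ ⟨r, hr⟩ := Fin.ne_of_lt h
    cases α i <;> simp [h, this, Nat.lt_succ_of_lt h]
  · obtain rfl : i = ⟨r, hr⟩ := Fin.ext h
    cases α ⟨r, hr⟩ <;> simp
  · have : i ≠ ⟨r, hr⟩ := Fin.ne_of_gt h
    simp [this, not_lt_of_gt h, Nat.not_lt_of_le (Nat.succ_le_of_lt h)]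

/-- The word `u 1^(t-p) 0^(n-t)`, where `u` is the restriction of `β` to the first `p` letters. -/
def fillOnes (β : Fin n → Bool) (p t : ℕ) : Fin n → Bool :=
  fun i => if (i : ℕ) < p then β i else decide ((i : ℕ) < t)

lemma onesBelow_fillOnes (β : Fin n → Bool) (p t : ℕ) {r : ℕ} (hr : r ≤ n) :
    onesBelow (fillOnes β p t) r = onesBelow β (min r p) + (min r t - p) := by
  induction r with
  | zero => simp [onesBelow_zero]
  | succ r ih =>
    have hr' : r < n := by omega
    rw [onesBelow_succ _ hr', ih hr'.le, fillOnes]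
    by_cases hrp : r < p
    · rw [if_pos hrp, show min (r + 1) p = r + 1 by omega, show min r p = r by omega,
        onesBelow_succ β hr']
      omega
    · rw [if_neg hrp, show min (r + 1) p = p by omega, show min r p = p by omega]
      by_cases hrt : r < t <;> simp [hrt] <;> omega

lemma fillOnes_eq_self (α : Fin n → Bool) : fillOnes α n n = α := by
  funext i
  simp [fillOnes]

lemma fillOnes_succ_of_true (β : Fin n → Bool) {p t : ℕ} (hp : p < n)
    (hβ : β ⟨p, hp⟩ = true) (hpt : p < t) : fillOnes β (p + 1) t = fillOnes β p t := by
  funext i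
  simp only [fillOnes]
  rcases Nat.lt_trichotomy i p with h | h | h
  · simp [h, Nat.lt_succ_of_lt h]
  · obtain rfl : i = ⟨p, hp⟩ := Fin.ext h
    simp [hβ, hpt]
  · simp [not_lt_of_gt h, Nat.not_lt_of_le (Nat.succ_le_of_lt h)]

lemma fillOnes_succ_of_false (β : Fin n → Bool) {p : ℕ} (hp : p < n)
    (hβ : β ⟨p, hp⟩ = false) (s : ℕ) :
    fillOnes β (p + 1) (p + s + 1) =
      fun i : Fin n => if (i : ℕ) < p then β i else decide (p < (i : ℕ) ∧ (i : ℕ) ≤ p + s) := by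
  funext i
  simp only [fillOnes]
  rcases Nat.lt_trichotomy i p with h | h | h
  · simp [h, Nat.lt_succ_of_lt h]
  · obtain rfl : i = ⟨p, hp⟩ := Fin.ext h
    simp [hβ]
  · simp [not_lt_of_gt h, Nat.not_lt_of_le (Nat.succ_le_of_lt h), h]

lemma fillOnes_succ_self_of_false (β : Fin n → Bool) {p : ℕ} (hp : p < n)
    (hβ : β ⟨p, hp⟩ = false) : fillOnes β (p + 1) (p + 1) = fillOnes β p p := by
  rw [fillOnes_succ_of_false β hp hβ 0]
  funext i
  simp only [fillOnes]
  by_cases hi : (i : ℕ) < p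
  · simp [hi]
  · simp only [hi, if_false, decide_eq_decide, iff_false, not_and]
    omega

lemma onesBelow_fillOnes_succ_of_false (β : Fin n → Bool) {p : ℕ} (hp : p < n)
    (hβ : β ⟨p, hp⟩ = false) (t : ℕ) {r : ℕ} (hr : r ≤ n) :
    onesBelow (fillOnes β (p + 1) t) r = onesBelow β (min r p) + (min r t - (p + 1)) := by
  rw [onesBelow_fillOnes β (p + 1) t hr]
  congr 1
  rcases le_or_gt r p with hrp | hrp
  · rw [min_eq_left hrp, min_eq_left (by omega)]
  · rw [min_eq_right hrp.le, min_eq_right hrp, onesBelow_succ β hp, hβ, Bool.toNat_false, add_zero]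

lemma breaksBallot_fillOnes_of_succ (β : Fin n → Bool) {p : ℕ} (hp : p < n)
    (hβ : β ⟨p, hp⟩ = false) (s : ℕ) (h : BreaksBallot (fillOnes β (p + 1) (p + s + 1))) :
    BreaksBallot (fillOnes β p (p + s)) := by
  obtain ⟨r, hrn, hr⟩ := h
  rw [onesBelow_fillOnes_succ_of_false β hp hβ _ hrn] at hr
  refine ⟨r, hrn, ?_⟩
  rw [onesBelow_fillOnes β p _ hrn]
  omega

lemma breaksBallot_fillOnes_pred_of_succ (β : Fin n → Bool) {p : ℕ} (hp : p < n)
    (hβ : β ⟨p, hp⟩ = false) {s : ℕ} (hs : 1 ≤ s)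
    (h : BreaksBallot (fillOnes β (p + 1) (p + s + 1))) :
    BreaksBallot (fillOnes β p (p + s - 1)) := by
  obtain ⟨r, hrn, hr⟩ := h
  rw [onesBelow_fillOnes_succ_of_false β hp hβ _ hrn] at hr
  rcases le_or_gt r p with hrp | hrp
  · refine ⟨r, hrn, ?_⟩
    rw [onesBelow_fillOnes β p _ hrn]
    omega
  · -- the shortened block starts one letter earlier, so the prefix one letter shorter (cut at
    -- the end of the block) still breaks the ballot condition
    refine ⟨min (r - 1) (p + s - 1), by omega, ?_⟩
    rw [onesBelow_fillOnes β p _ (by omega), show min (min (r - 1) (p + s - 1)) p = p by omega]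
    rw [min_eq_right hrp.le] at hr
    omega

/-- The ideal `I_n`. -/
noncomputable def fqIdeal (n : ℕ) : TwoSidedIdeal (ExteriorAlgebra ℚ (Fin n → ℚ)) :=
  TwoSidedIdeal.span {x | ∃ r : ℕ, 1 ≤ r ∧ r ≤ n ∧ x = Fq n r}

namespace GRec

variable {G : (Fin n → Bool) → ExteriorAlgebra ℚ (Fin n → ℚ)}

lemma mem_fqIdeal_of_fillOnes_zero (hG : GRec n G) (β : Fin n → Bool) {t : ℕ} (ht : t ≤ n)
    (h : BreaksBallot (fillOnes β 0 t)) : G (fillOnes β 0 t) ∈ fqIdeal n := by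
  obtain ⟨r, hrn, hr⟩ := h
  rw [onesBelow_fillOnes β 0 t hrn, Nat.min_zero, onesBelow_zero] at hr
  have hword : fillOnes β 0 t = fun i : Fin n => decide ((i : ℕ) < t) := by
    funext i
    simp [fillOnes]
  rw [hword, hG.1 t ht]
  exact TwoSidedIdeal.subset_span ⟨t, by omega, ht, rfl⟩

theorem mem_fqIdeal_of_fillOnes (hG : GRec n G) (β : Fin n → Bool) {p t : ℕ} (hpt : p ≤ t)
    (htn : t ≤ n) (h : BreaksBallot (fillOnes β p t)) : G (fillOnes β p t) ∈ fqIdeal n := by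
  induction p generalizing t with
  | zero => exact hG.mem_fqIdeal_of_fillOnes_zero β htn h
  | succ p ih =>
    have hp : p < n := by omega
    cases hβ : β ⟨p, hp⟩ with
    | true =>
      rw [fillOnes_succ_of_true β hp hβ (by omega)] at h ⊢
      exact ih (by omega) htn h
    | false =>
      obtain rfl | ⟨s, hs, rfl⟩ : t = p + 1 ∨ ∃ s, 1 ≤ s ∧ t = p + s + 1 :=
        (eq_or_lt_of_le hpt).imp Eq.symm fun h => ⟨t - p - 1, by omega, by omega⟩
      · rw [fillOnes_succ_self_of_false β hp hβ] at h ⊢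
        exact ih le_rfl (by omega) h
      · have hps : p + s < n := by omega
        have hshift := ih (by omega) hps.le (breaksBallot_fillOnes_of_succ β hp hβ s h)
        have hshrink := ih (t := p + s - 1) (by omega) (by omega)
          (breaksBallot_fillOnes_pred_of_succ β hp hβ hs h)
        rw [fillOnes_succ_of_false β hp hβ, hG.2 β p s hs hps, Algebra.smul_def]
        exact TwoSidedIdeal.sub_mem _ hshift
          (TwoSidedIdeal.mul_mem_left _ _ _ (TwoSidedIdeal.mul_mem_left _ _ _ hshrink))

end GRec

/-- If `α` breaks the ballot condition, then `G_α` lies in the two-sided ideal `I_n`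
generated by `F_1, …, F_n`. -/
theorem stmt18 (n : ℕ) (G : (Fin n → Bool) → ExteriorAlgebra ℚ (Fin n → ℚ))
    (hG : GRec n G) (α : Fin n → Bool) (hα : BreaksBallot α) :
    G α ∈ TwoSidedIdeal.span {x | ∃ r : ℕ, 1 ≤ r ∧ r ≤ n ∧ x = Fq n r} := by
  rw [← fillOnes_eq_self α] at hα ⊢
  exact hG.mem_fqIdeal_of_fillOnes α le_rfl le_rfl hα
end
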